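/- Let D < -4 with D ≡ 0 or 1 mod 4, let Q_1,…,Q_h be the reduced forms of discriminant D, and let γ_1,…,γ_m be a complete set of representatives of the left cosets of ±Γ_1(N) in SL_2(ℤ). Then the forms Q_i^{γ_k} (for those pairs (i,k) with gcd of the leading coefficient of Q_i^{γ_k} and N equal to 1) represent pairwise distinct classes in 𝒬(D,N)/Γ_1(N), and every class in 𝒬(D,N)/Γ_1(N) is represented by some such Q_i^{γ_k}. -/

import Mathlib

open CongruenceSubgroup

/-- The coefficients `(a', b', c')` of the form `Q^γ(v) = Q(γv)` obtained from the form
`F = (a, b, c)` (i.e. `a x² + b x y + c y²`) by the matrix `γ`. -/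
def formAct (γ : Matrix.SpecialLinearGroup (Fin 2) ℤ) (F : ℤ × ℤ × ℤ) : ℤ × ℤ × ℤ :=
  (F.1 * (γ 0 0) ^ 2 + F.2.1 * (γ 0 0) * (γ 1 0) + F.2.2 * (γ 1 0) ^ 2,
   2 * F.1 * (γ 0 0) * (γ 0 1) + F.2.1 * ((γ 0 0) * (γ 1 1) + (γ 0 1) * (γ 1 0))
     + 2 * F.2.2 * (γ 1 0) * (γ 1 1),
   F.1 * (γ 0 1) ^ 2 + F.2.1 * (γ 0 1) * (γ 1 1) + F.2.2 * (γ 1 1) ^ 2)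

/-- `F = (a,b,c)` is a primitive positive definite form of discriminant `D`. -/
def IsForm (D : ℤ) (F : ℤ × ℤ × ℤ) : Prop :=
  Int.gcd (Int.gcd F.1 F.2.1) F.2.2 = 1 ∧ 0 < F.1 ∧ F.2.1 ^ 2 - 4 * F.1 * F.2.2 = D

/-- `F = (a,b,c)` is reduced: `|b| ≤ a ≤ c`, with `b ≥ 0` if `|b| = a` or `a = c`. -/
def IsReducedForm (F : ℤ × ℤ × ℤ) : Prop :=
  |F.2.1| ≤ F.1 ∧ F.1 ≤ F.2.2 ∧ ((|F.2.1| = F.1 ∨ F.1 = F.2.2) → 0 ≤ F.2.1)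

/-!
Reduction: translating by `T ^ m` puts `b` into `(-a, a]`, and while `c < a` the swap `S` lowers
`a`, so every positive definite form is `SL₂(ℤ)`-equivalent to a reduced one.

Uniqueness: `a` is the minimum of a reduced form on nonzero vectors, and for `D < -4` it is not
attained off the coordinate axes (that would need `a = |b| = c`, i.e. `(1, 1, 1)` and `D = -3`).
If `g` carries a reduced form `F` to a reduced form `G`, then `G.a = F(g e₁) ≥ F.a` and
`F.a = G(g⁻¹ e₁) ≥ G.a`; equality puts the first columns of `g` and `g⁻¹` on the axes. Either
`g = ±T^n`, and `n = 0` since both middle coefficients lie in `(-a, a]`, or `g = ±S`, which sends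
`(a, b, c)` to `(c, -b, a)` and forces `F = (1, 0, 1)`, of discriminant `-4`.

Since `-1` acts trivially on forms and `Γ₁(N)` fixes `a mod N`, refining `SL₂(ℤ)`-classes to
`Γ₁(N)`-classes just splits each reduced form along the cosets of `±Γ₁(N)`.
-/

open ModularGroup

def formValue (F : ℤ × ℤ × ℤ) (x y : ℤ) : ℤ :=
  F.1 * x ^ 2 + F.2.1 * x * y + F.2.2 * y ^ 2

def formContent (F : ℤ × ℤ × ℤ) : ℕ :=
  Int.gcd (Int.gcd F.1 F.2.1) F.2.2

section SL2

variable (g : Matrix.SpecialLinearGroup (Fin 2) ℤ)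

lemma sl2_det : g 0 0 * g 1 1 - g 0 1 * g 1 0 = 1 := by
  have := g.det_coe
  rwa [Matrix.det_fin_two] at this

lemma sl2_col_zero_ne_zero : g 0 0 ≠ 0 ∨ g 1 0 ≠ 0 := by
  by_contra! h
  simpa [h.1, h.2] using sl2_det g

lemma sl2_inv_apply_zero_zero : g⁻¹ 0 0 = g 1 1 := by
  simp [Matrix.SpecialLinearGroup.coe_inv, Matrix.adjugate_fin_two]

lemma sl2_inv_apply_one_zero : g⁻¹ 1 0 = -g 1 0 := by
  simp [Matrix.SpecialLinearGroup.coe_inv, Matrix.adjugate_fin_two]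

end SL2

section Action

variable (g δ : Matrix.SpecialLinearGroup (Fin 2) ℤ) (F : ℤ × ℤ × ℤ)

lemma formAct_fst : (formAct g F).1 = formValue F (g 0 0) (g 1 0) := rfl

lemma formAct_one : formAct 1 F = F := by
  simp [formAct]

lemma formAct_formAct : formAct δ (formAct g F) = formAct (g * δ) F := by
  simp only [formAct, Matrix.SpecialLinearGroup.coe_mul]
  refine Prod.ext ?_ (Prod.ext ?_ ?_) <;>
  · simp [Matrix.mul_apply, Fin.sum_univ_succ]
    ring

lemma formAct_inv_formAct : formAct g⁻¹ (formAct g F) = F := by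
  rw [formAct_formAct, mul_inv_cancel, formAct_one]

lemma formAct_neg : formAct (-g) F = formAct g F := by
  simp only [formAct, Matrix.SpecialLinearGroup.coe_neg, Matrix.neg_apply]
  refine Prod.ext ?_ (Prod.ext ?_ ?_) <;> ring

lemma disc_formAct :
    (formAct g F).2.1 ^ 2 - 4 * (formAct g F).1 * (formAct g F).2.2
      = F.2.1 ^ 2 - 4 * F.1 * F.2.2 := by
  simp only [formAct]
  linear_combination (g 0 0 * g 1 1 - g 0 1 * g 1 0 + 1) * (F.2.1 ^ 2 - 4 * F.1 * F.2.2) * sl2_det g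

lemma formContent_dvd_formAct : formContent F ∣ formContent (formAct g F) := by
  have ha : (formContent F : ℤ) ∣ F.1 := (Int.gcd_dvd_left _ _).trans (Int.gcd_dvd_left _ _)
  have hb : (formContent F : ℤ) ∣ F.2.1 := (Int.gcd_dvd_left _ _).trans (Int.gcd_dvd_right _ _)
  have hc : (formContent F : ℤ) ∣ F.2.2 := Int.gcd_dvd_right _ _
  rw [← Int.natCast_dvd_natCast]
  exact Int.dvd_coe_gcd (Int.dvd_coe_gcd
    (dvd_add (dvd_add (ha.mul_right _) ((hb.mul_right _).mul_right _)) (hc.mul_right _))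
    (dvd_add (dvd_add (((ha.mul_left 2).mul_right _).mul_right _) (hb.mul_right _))
      (((hc.mul_left 2).mul_right _).mul_right _)))
    (dvd_add (dvd_add (ha.mul_right _) ((hb.mul_right _).mul_right _)) (hc.mul_right _))

lemma formContent_formAct : formContent (formAct g F) = formContent F :=
  Nat.dvd_antisymm
    (by simpa only [formAct_inv_formAct] using formContent_dvd_formAct g⁻¹ (formAct g F))
    (formContent_dvd_formAct g F)

end Action

lemma formValue_pos {F : ℤ × ℤ × ℤ} (ha : 0 < F.1) (hD : F.2.1 ^ 2 - 4 * F.1 * F.2.2 < 0)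
    {x y : ℤ} (hxy : x ≠ 0 ∨ y ≠ 0) : 0 < formValue F x y := by
  have key : 4 * F.1 * formValue F x y = (2 * F.1 * x + F.2.1 * y) ^ 2
      - (F.2.1 ^ 2 - 4 * F.1 * F.2.2) * y ^ 2 := by
    simp only [formValue]; ring
  rcases eq_or_ne y 0 with rfl | hy
  · have hx : x ≠ 0 := by simpa using hxy
    have hx2 : 0 < x ^ 2 := by positivity
    simp only [formValue]; nlinarith
  · have hy2 : 0 < y ^ 2 := by positivity
    nlinarith [sq_nonneg (2 * F.1 * x + F.2.1 * y)]

lemma IsForm.formAct {D : ℤ} {F : ℤ × ℤ × ℤ} (hF : IsForm D F) (hD : D < 0)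
    (g : Matrix.SpecialLinearGroup (Fin 2) ℤ) : IsForm D (formAct g F) := by
  obtain ⟨hprim, ha, hdisc⟩ := hF
  refine ⟨(formContent_formAct g F).trans hprim, ?_, (disc_formAct g F).trans hdisc⟩
  rw [formAct_fst]
  exact formValue_pos ha (hdisc ▸ hD) (sl2_col_zero_ne_zero g)

lemma isReducedForm_iff (a b c : ℤ) :
    IsReducedForm (a, b, c) ↔ |b| ≤ a ∧ a ≤ c ∧ ((|b| = a ∨ a = c) → 0 ≤ b) :=
  Iff.rfl

lemma formAct_T_zpow (m a b c : ℤ) :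
    formAct (T ^ m) (a, b, c) = (a, b + 2 * a * m, a * m ^ 2 + b * m + c) := by
  simp [formAct, coe_T_zpow, add_comm]

lemma formAct_S (a b c : ℤ) : formAct S (a, b, c) = (c, -b, a) := by
  simp [formAct, coe_S]

lemma exists_isReducedForm_formAct_of_le {a b c : ℤ} (hba : -a < b) (hab : b ≤ a) (hac : a ≤ c) :
    ∃ δ, IsReducedForm (formAct δ (a, b, c)) := by
  by_cases hS : b < 0 ∧ a = c
  · refine ⟨S, ?_⟩
    rw [formAct_S, isReducedForm_iff, abs_of_pos (by omega)]
    omega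
  · refine ⟨1, ?_⟩
    rw [formAct_one, isReducedForm_iff]
    rcases abs_cases b with ⟨hb, -⟩ | ⟨hb, -⟩ <;> rw [hb] <;> omega

theorem exists_isReducedForm_formAct {D : ℤ} (hD : D < 0) (F : ℤ × ℤ × ℤ) (hF : IsForm D F) :
    ∃ δ, IsReducedForm (formAct δ F) := by
  induction hn : F.1.toNat using Nat.strong_induction_on generalizing F with
  | _ n ih =>
  obtain ⟨a, b, c⟩ := F
  have ha : 0 < a := hF.2.1
  -- `T ^ m` moves `b` by `2am` into `(-a, a]`
  set m := (a - b) / (2 * a)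
  have hm : (a - b) % (2 * a) + 2 * a * m = a - b := Int.emod_add_mul_ediv _ _
  have hr0 : 0 ≤ (a - b) % (2 * a) := Int.emod_nonneg _ (by omega)
  have hr1 : (a - b) % (2 * a) < 2 * a := Int.emod_lt_of_pos _ (by omega)
  have hT := formAct_T_zpow m a b c
  set c₁ := a * m ^ 2 + b * m + c
  have hF₁ : IsForm D (a, b + 2 * a * m, c₁) := hT ▸ hF.formAct hD _
  rcases le_or_gt a c₁ with hac | hca
  · obtain ⟨δ, hδ⟩ :=
      exists_isReducedForm_formAct_of_le (b := b + 2 * a * m) (by linarith) (by linarith) hac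
    exact ⟨T ^ m * δ, by rwa [← formAct_formAct, hT]⟩
  · have hF₂ : IsForm D (c₁, -(b + 2 * a * m), a) := formAct_S a _ c₁ ▸ hF₁.formAct hD S
    have hc₁ : 0 < c₁ := hF₂.2.1
    obtain ⟨δ, hδ⟩ := ih c₁.toNat (by dsimp only at hn; omega) _ hF₂ rfl
    exact ⟨T ^ m * S * δ, by rwa [← formAct_formAct, ← formAct_formAct, hT, formAct_S]⟩

lemma IsForm.eq_one_of_dvd {D a b c : ℤ} (hF : IsForm D (a, b, c)) (hb : a ∣ b) (hc : a ∣ c) :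
    a = 1 := by
  have h : a ∣ (formContent (a, b, c) : ℤ) := Int.dvd_coe_gcd (Int.dvd_coe_gcd dvd_rfl hb) hc
  rw [show formContent (a, b, c) = 1 from hF.1, Nat.cast_one] at h
  exact Int.eq_one_of_dvd_one hF.2.1.le h

namespace IsReducedForm

variable {D : ℤ} {F : ℤ × ℤ × ℤ} {g : Matrix.SpecialLinearGroup (Fin 2) ℤ}

lemma neg_fst_lt (hr : IsReducedForm F) (ha : 0 < F.1) : -F.1 < F.2.1 := by
  obtain ⟨hb, -, hs⟩ := hr
  rcases (abs_le.1 hb).1.lt_or_eq with h | h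
  · exact h
  · have := hs (Or.inl (by rw [← h, abs_neg, abs_of_pos ha]))
    omega

lemma add_sub_abs_le_formValue (hr : IsReducedForm F) {x y : ℤ} (hx : x ≠ 0) (hy : y ≠ 0) :
    F.1 + (F.2.2 - |F.2.1|) ≤ formValue F x y := by
  obtain ⟨a, b, c⟩ := F
  obtain ⟨hb, hac, -⟩ := hr
  dsimp only at hb hac ⊢
  have hX : 1 ≤ |x| := Int.one_le_abs hx
  have hY : 1 ≤ |y| := Int.one_le_abs hy
  have hxy : -(|b| * |x| * |y|) ≤ b * x * y := by
    rw [← abs_mul, ← abs_mul]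
    exact neg_abs_le _
  have hB : 0 ≤ |b| := abs_nonneg b
  rw [formValue, ← sq_abs x, ← sq_abs y]
  nlinarith [mul_nonneg (sub_nonneg.2 hb) (by nlinarith : (0 : ℤ) ≤ |x| ^ 2 - 1),
    mul_nonneg (by linarith : 0 ≤ c - |b|) (by nlinarith : (0 : ℤ) ≤ |y| ^ 2 - 1),
    mul_nonneg hB (sq_nonneg (|x| - |y|)), mul_nonneg hB (by nlinarith : (0 : ℤ) ≤ |x| * |y| - 1)]

lemma fst_le_formValue (hr : IsReducedForm F) {x y : ℤ} (hxy : x ≠ 0 ∨ y ≠ 0) :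
    F.1 ≤ formValue F x y := by
  have ha : 0 ≤ F.1 := (abs_nonneg _).trans hr.1
  rcases eq_or_ne y 0 with rfl | hy
  · have hx : 1 ≤ x ^ 2 := by nlinarith [Int.one_le_abs (by simpa using hxy : x ≠ 0), sq_abs x]
    simp only [formValue]
    nlinarith
  rcases eq_or_ne x 0 with rfl | hx
  · have hy : 1 ≤ y ^ 2 := by nlinarith [Int.one_le_abs hy, sq_abs y]
    simp only [formValue]
    nlinarith [hr.2.1]
  · linarith [hr.add_sub_abs_le_formValue hx hy, hr.1, hr.2.1]

lemma abs_snd_lt (hr : IsReducedForm F) (hD : D < -4) (hF : IsForm D F) : |F.2.1| < F.2.2 := by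
  obtain ⟨a, b, c⟩ := F
  obtain ⟨hb, hac, hs⟩ := hr
  dsimp only at hb hac hs ⊢
  by_contra! hcb
  have hba : b = a := by
    have := hs (Or.inr (by linarith))
    rw [abs_of_nonneg this] at hb hcb
    linarith
  have hca : c = a := by rw [hba, abs_of_pos hF.2.1] at hcb; linarith
  rw [hba, hca] at hF
  have h1 : a = 1 := hF.eq_one_of_dvd dvd_rfl dvd_rfl
  have := hF.2.2
  simp only [h1] at this
  omega

lemma fst_lt_formValue (hr : IsReducedForm F) (hD : D < -4) (hF : IsForm D F) {x y : ℤ}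
    (hx : x ≠ 0) (hy : y ≠ 0) : F.1 < formValue F x y := by
  linarith [hr.add_sub_abs_le_formValue hx hy, hr.abs_snd_lt hD hF]

lemma fst_le_fst_formAct (hr : IsReducedForm F) (g : Matrix.SpecialLinearGroup (Fin 2) ℤ) :
    F.1 ≤ (formAct g F).1 :=
  hr.fst_le_formValue (sl2_col_zero_ne_zero g)

lemma eq_zero_or_eq_zero_of_fst_formAct_eq (hr : IsReducedForm F) (hD : D < -4)
    (hF : IsForm D F) (h : (formAct g F).1 = F.1) : g 0 0 = 0 ∨ g 1 0 = 0 := by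
  by_contra! hne
  exact (hr.fst_lt_formValue hD hF hne.1 hne.2).ne' h

lemma eq_one_or_neg_one_of_apply_one_zero (hr : IsReducedForm F) (ha : 0 < F.1)
    (hr' : IsReducedForm (formAct g F)) (h10 : g 1 0 = 0) : g = 1 ∨ g = -1 := by
  have hdet := sl2_det g
  simp only [h10, mul_zero, sub_zero] at hdet
  have hb := hr.neg_fst_lt ha
  have h00 : g 0 0 ≠ 0 := left_ne_zero_of_mul_eq_one hdet
  have hb' := hr'.neg_fst_lt (by simp only [formAct, h10]; nlinarith [pow_two_pos_of_ne_zero h00])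
  have hba := (abs_le.1 hr.1).2
  have hba' := (abs_le.1 hr'.1).2
  obtain ⟨a, b, c⟩ := F
  simp only [formAct, h10] at hb' hba' ⊢
  rcases Int.eq_one_or_neg_one_of_mul_eq_one' hdet with ⟨h00, h11⟩ | ⟨h00, h11⟩ <;>
  · simp only [h00, h11] at hb' hba'
    have h01 : g 0 1 = 0 := by
      rcases lt_trichotomy (g 0 1) 0 with h | h | h
      · nlinarith
      · exact h
      · nlinarith
    simp [Matrix.SpecialLinearGroup.ext_iff, Fin.forall_fin_two, h00, h01, h10, h11]

lemma not_isReducedForm_formAct_of_diag_eq_zero (hr : IsReducedForm F) (hD : D < -4)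
    (hF : IsForm D F) (h00 : g 0 0 = 0) (h11 : g 1 1 = 0) : ¬IsReducedForm (formAct g F) := by
  intro hr'
  have hdet := sl2_det g
  simp only [h00, h11, zero_mul, zero_sub] at hdet
  obtain ⟨a, b, c⟩ := F
  have hsq : g 0 1 ^ 2 = 1 ∧ g 1 0 ^ 2 = 1 := by
    rcases Int.eq_one_or_neg_one_of_mul_eq_neg_one' (neg_eq_iff_eq_neg.1 hdet) with
      ⟨h1, h2⟩ | ⟨h1, h2⟩ <;> simp [h1, h2]
  obtain ⟨hb, hac, hs⟩ := hr
  obtain ⟨-, hca, hs'⟩ := hr'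
  have hβγ : g 0 1 * g 1 0 = -1 := by linarith
  simp only [formAct, h00, h11, hsq.1, hsq.2, hβγ, ne_eq, OfNat.ofNat_ne_zero,
    not_false_eq_true, zero_pow, mul_zero, zero_mul, add_zero, zero_add, mul_one, mul_neg,
    abs_neg, Int.neg_nonneg] at hca hs'
  dsimp only at hb hac hs
  replace hca : c = a := by linarith
  have hb0 : b = 0 := by linarith [hs (Or.inr hca.symm), hs' (Or.inr hca)]
  rw [hb0, hca] at hF
  have h1 : a = 1 := hF.eq_one_of_dvd (dvd_zero a) dvd_rfl
  have := hF.2.2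
  simp only [h1] at this
  omega

theorem eq_one_or_neg_one_of_formAct (hr : IsReducedForm F) (hD : D < -4) (hF : IsForm D F)
    (hr' : IsReducedForm (formAct g F)) : g = 1 ∨ g = -1 := by
  set G := formAct g F
  have hG : IsForm D G := hF.formAct (by omega) g
  have hGF : formAct g⁻¹ G = F := formAct_inv_formAct g F
  have ha : G.1 = F.1 :=
    le_antisymm (hGF ▸ hr'.fst_le_fst_formAct g⁻¹) (hr.fst_le_fst_formAct g)
  rcases eq_or_ne (g 1 0) 0 with h10 | h10
  · exact hr.eq_one_or_neg_one_of_apply_one_zero hF.2.1 hr' h10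
  · have h00 := (hr.eq_zero_or_eq_zero_of_fst_formAct_eq hD hF ha).resolve_right h10
    have h11 : g 1 1 = 0 := by
      have := hr'.eq_zero_or_eq_zero_of_fst_formAct_eq hD hG (g := g⁻¹) (by rw [hGF, ha])
      simpa [sl2_inv_apply_zero_zero, sl2_inv_apply_one_zero, h10] using this
    exact (hr.not_isReducedForm_formAct_of_diag_eq_zero hD hF h00 h11 hr').elim

end IsReducedForm

lemma gcd_fst_formAct_of_mem_Gamma1 {N : ℕ} {g : Matrix.SpecialLinearGroup (Fin 2) ℤ}
    (hg : g ∈ Gamma1 N) (F : ℤ × ℤ × ℤ) : Int.gcd (formAct g F).1 N = Int.gcd F.1 N := by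
  obtain ⟨h00, -, h10⟩ := (Gamma1_mem N g).1 hg
  have h : ((formAct g F).1 : ZMod N) = F.1 := by
    simp only [formAct, Int.cast_add, Int.cast_mul, Int.cast_pow, h00, h10]
    ring
  rw [← Int.gcd_emod, (ZMod.intCast_eq_intCast_iff' _ _ _).1 h, Int.gcd_emod]

lemma mem_or_neg_mem_of_mem_sup_zpowers_neg_one {G : Type*} [Group G] [HasDistribNeg G]
    {H : Subgroup G} {g : G} (hg : g ∈ H ⊔ Subgroup.zpowers (-1)) : g ∈ H ∨ -g ∈ H := by
  let H' : Subgroup G :=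
    { carrier := {g | g ∈ H ∨ -g ∈ H}
      one_mem' := Or.inl H.one_mem
      mul_mem' := by
        rintro a b (ha | ha) (hb | hb)
        · exact Or.inl (H.mul_mem ha hb)
        · exact Or.inr (by rw [← mul_neg]; exact H.mul_mem ha hb)
        · exact Or.inr (by rw [← neg_mul]; exact H.mul_mem ha hb)
        · exact Or.inl (by rw [← neg_mul_neg]; exact H.mul_mem ha hb)
      inv_mem' := by
        rintro a (ha | ha)
        · exact Or.inl (H.inv_mem ha)
        · exact Or.inr (by rw [← inv_neg]; exact H.inv_mem ha) }
  have hle : H ⊔ Subgroup.zpowers (-1) ≤ H' :=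
    sup_le (fun _ hx ↦ Or.inl hx)
      (Subgroup.zpowers_le.2 (Or.inr (by rw [neg_neg]; exact H.one_mem)))
  exact hle hg

lemma exists_mem_sup_zpowers_neg_one_eq_mul {G : Type*} [Group G] [HasDistribNeg G]
    {H : Subgroup G} {a b g : G} (hg : g ∈ H) (h : a * g * b⁻¹ = 1 ∨ a * g * b⁻¹ = -1) :
    ∃ u ∈ H ⊔ Subgroup.zpowers (-1), a = b * u := by
  have ha : a = a * g * b⁻¹ * b * g⁻¹ := by group
  rcases h with h | h <;> rw [h] at ha
  · exact ⟨g⁻¹, Subgroup.mem_sup_left (inv_mem hg), by rw [ha, one_mul]⟩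
  · refine ⟨-1 * g⁻¹, mul_mem (Subgroup.mem_sup_right (Subgroup.mem_zpowers _))
      (Subgroup.mem_sup_left (inv_mem hg)), ?_⟩
    rw [ha, neg_one_mul, neg_one_mul, neg_mul, mul_neg]

lemma exists_mem_Gamma1_formAct_eq {N : ℕ} {g : Matrix.SpecialLinearGroup (Fin 2) ℤ}
    (hg : g ∈ Gamma1 N ⊔ Subgroup.zpowers (-1)) : ∃ g' ∈ Gamma1 N, formAct g' = formAct g := by
  rcases mem_or_neg_mem_of_mem_sup_zpowers_neg_one hg with hg | hg
  · exact ⟨g, hg, rfl⟩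
  · exact ⟨-g, hg, funext (formAct_neg g)⟩

theorem extended_form_class_group_representatives_general
    (D : ℤ) (hD4 : D < -4)
    (N : ℕ) (h m : ℕ)
    (Q : Fin h → ℤ × ℤ × ℤ)
    (hQ : ∀ F : ℤ × ℤ × ℤ, (IsForm D F ∧ IsReducedForm F) ↔ ∃ i, F = Q i)
    (hQinj : Function.Injective Q)
    (γ : Fin m → Matrix.SpecialLinearGroup (Fin 2) ℤ)
    (hγ : ∀ δ : Matrix.SpecialLinearGroup (Fin 2) ℤ,
        ∃! k : Fin m, ∃ g ∈ Gamma1 N ⊔ Subgroup.zpowers (-1), δ = γ k * g) :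
    (∀ (i i' : Fin h) (k k' : Fin m),
        Int.gcd (formAct (γ k) (Q i)).1 N = 1 →
        Int.gcd (formAct (γ k') (Q i')).1 N = 1 →
        (∃ g ∈ Gamma1 N, formAct g (formAct (γ k) (Q i)) = formAct (γ k') (Q i')) →
        i = i' ∧ k = k') ∧
    (∀ F : ℤ × ℤ × ℤ, IsForm D F → Int.gcd F.1 N = 1 →
        ∃ (i : Fin h) (k : Fin m),
          Int.gcd (formAct (γ k) (Q i)).1 N = 1 ∧
          ∃ g ∈ Gamma1 N, formAct g (formAct (γ k) (Q i)) = F) := by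
  have hQred : ∀ i, IsForm D (Q i) ∧ IsReducedForm (Q i) := fun i ↦ (hQ (Q i)).2 ⟨i, rfl⟩
  constructor
  · rintro i i' k k' - - ⟨g, hg, hgk⟩
    have hδ : formAct (γ k * g * (γ k')⁻¹) (Q i) = Q i' := by
      rw [← formAct_formAct, ← formAct_formAct, hgk, formAct_inv_formAct]
    have hδ1 := (hQred i).2.eq_one_or_neg_one_of_formAct hD4 (hQred i).1 (hδ ▸ (hQred i').2)
    refine ⟨hQinj ?_, (hγ (γ k)).unique ⟨1, one_mem _, (mul_one _).symm⟩
      (exists_mem_sup_zpowers_neg_one_eq_mul hg hδ1)⟩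
    rcases hδ1 with h1 | h1 <;> rw [h1] at hδ
    exacts [(formAct_one _).symm.trans hδ, by rwa [formAct_neg, formAct_one] at hδ]
  · intro F hF hgcd
    obtain ⟨δ, hδ⟩ := exists_isReducedForm_formAct (by omega) F hF
    obtain ⟨i, hi⟩ := (hQ _).1 ⟨hF.formAct (by omega) δ, hδ⟩
    obtain ⟨k, ⟨g, hg, hk⟩, -⟩ := hγ δ⁻¹
    obtain ⟨g', hg', hgg'⟩ := exists_mem_Gamma1_formAct_eq hg
    have hF' : formAct g' (formAct (γ k) (Q i)) = F := by
      rw [hgg', formAct_formAct, ← hk, ← hi, formAct_inv_formAct]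
    exact ⟨i, k, by rw [← gcd_fst_formAct_of_mem_Gamma1 hg', hF', hgcd], g', hg', hF'⟩

/-- Let `D < -4` with `D ≡ 0, 1 (mod 4)`, let `Q₁, …, Q_h` be the reduced forms of
discriminant `D`, and `γ₁, …, γ_m` a complete set of representatives of the left
cosets of `±Γ₁(N)` in `SL₂(ℤ)`. Then the forms `Qᵢ^{γₖ}` whose leading coefficient
is prime to `N` represent all classes of `𝒬(D,N)/Γ₁(N)`, without repetition. -/
theorem extended_form_class_group_representatives
    (D : ℤ) (hD4 : D < -4) (hDcong : D % 4 = 0 ∨ D % 4 = 1)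
    (N : ℕ) (hN : 0 < N) (h m : ℕ)
    (Q : Fin h → ℤ × ℤ × ℤ)
    (hQ : ∀ F : ℤ × ℤ × ℤ, (IsForm D F ∧ IsReducedForm F) ↔ ∃ i, F = Q i)
    (hQinj : Function.Injective Q)
    (γ : Fin m → Matrix.SpecialLinearGroup (Fin 2) ℤ)
    (hγ : ∀ δ : Matrix.SpecialLinearGroup (Fin 2) ℤ,
        ∃! k : Fin m, ∃ g ∈ Gamma1 N ⊔ Subgroup.zpowers (-1), δ = γ k * g) :
    (∀ (i i' : Fin h) (k k' : Fin m),
        Int.gcd (formAct (γ k) (Q i)).1 N = 1 →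
        Int.gcd (formAct (γ k') (Q i')).1 N = 1 →
        (∃ g ∈ Gamma1 N, formAct g (formAct (γ k) (Q i)) = formAct (γ k') (Q i')) →
        i = i' ∧ k = k') ∧
    (∀ F : ℤ × ℤ × ℤ, IsForm D F → Int.gcd F.1 N = 1 →
        ∃ (i : Fin h) (k : Fin m),
          Int.gcd (formAct (γ k) (Q i)).1 N = 1 ∧
          ∃ g ∈ Gamma1 N, formAct g (formAct (γ k) (Q i)) = F) :=
  extended_form_class_group_representatives_general D hD4 N h m Q hQ hQinj γ hγ
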